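/- arXiv:2308.03473 — 2 statements merged into one kernel-verified Lean document; each statement's English description precedes it below -/
import Mathlib

section
/- Let X, Y be square-integrable random variables and F a sub-σ-algebra. Suppose that almost surely |Cov(X,Y | F)| ≤ ε · Var(X|F)^{1/2} · Var(Y|F)^{1/2} for some ε ≥ 0, and that Cov(E[X|F], E[Y|F]) = 0. Then Cov(X,Y) ≤ ε · Var(X)^{1/2} · Var(Y)^{1/2}. -/
/-!
By the law of total covariance, `Cov(X,Y) = E[Cov(X,Y|F)] + Cov(E[X|F], E[Y|F])`, and the second
term vanishes. The first is at most `ε E[√Var(X|F) √Var(Y|F)]`, which Cauchy–Schwarz bounds by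
`ε √E[Var(X|F)] √E[Var(Y|F)]`; finally `E[Var(X|F)] ≤ Var(X)` by the law of total variance.
-/

open MeasureTheory ProbabilityTheory

/-- Covariance of two real random variables. -/
noncomputable def cov {Ω : Type*} [MeasurableSpace Ω] (μ : Measure Ω) (U V : Ω → ℝ) : ℝ :=
  ∫ ω, (U ω - ∫ x, U x ∂μ) * (V ω - ∫ x, V x ∂μ) ∂μ

lemma cov_eq_covariance {Ω : Type*} {mΩ : MeasurableSpace Ω} (μ : Measure Ω) (U V : Ω → ℝ) :
    cov μ U V = cov[U, V; μ] :=
  rfl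

namespace MeasureTheory

variable {α : Type*} {mα : MeasurableSpace α} {μ : Measure α} {f g : α → ℝ}

lemma Integrable.memLp_sqrt (hf : Integrable f μ) (hf0 : 0 ≤ᵐ[μ] f) :
    MemLp (fun x ↦ √(f x)) 2 μ := by
  refine (memLp_two_iff_integrable_sq
    (Real.continuous_sqrt.comp_aestronglyMeasurable hf.aestronglyMeasurable)).2 ?_
  refine hf.congr ?_
  filter_upwards [hf0] with x hx
  exact (Real.sq_sqrt hx).symm

lemma integral_sqrt_mul_sqrt_le (hf : Integrable f μ) (hg : Integrable g μ)
    (hf0 : 0 ≤ᵐ[μ] f) (hg0 : 0 ≤ᵐ[μ] g) :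
    ∫ x, √(f x) * √(g x) ∂μ ≤ √(∫ x, f x ∂μ) * √(∫ x, g x ∂μ) := by
  have h2 : ENNReal.ofReal 2 = 2 := by norm_num
  have holder := integral_mul_le_Lp_mul_Lq_of_nonneg Real.HolderConjugate.two_two
    (.of_forall fun x ↦ Real.sqrt_nonneg (f x)) (.of_forall fun x ↦ Real.sqrt_nonneg (g x))
    (h2 ▸ hf.memLp_sqrt hf0) (h2 ▸ hg.memLp_sqrt hg0)
  have hsq {h : α → ℝ} (h0 : 0 ≤ᵐ[μ] h) : ∫ x, √(h x) ^ (2 : ℝ) ∂μ = ∫ x, h x ∂μ := by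
    refine integral_congr_ae ?_
    filter_upwards [h0] with x hx
    rw [Real.rpow_two, Real.sq_sqrt hx]
  rwa [hsq hf0, hsq hg0, ← Real.sqrt_eq_rpow, ← Real.sqrt_eq_rpow] at holder

end MeasureTheory

namespace ProbabilityTheory

variable {Ω : Type*} {mΩ m : MeasurableSpace Ω} {X Y : Ω → ℝ} {μ : Measure[mΩ] Ω}

variable (m X Y μ) in
noncomputable def condCov : Ω → ℝ := μ[X * Y | m] - μ[X | m] * μ[Y | m]

lemma integral_condCov_add_covariance_condExp (hm : m ≤ mΩ) [IsProbabilityMeasure μ]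
    (hX : MemLp X 2 μ) (hY : MemLp Y 2 μ) :
    μ[condCov m X Y μ] + cov[μ[X | m], μ[Y | m]; μ] = cov[X, Y; μ] := by
  have hXc := hX.condExp (m := m) one_le_two
  have hYc := hY.condExp (m := m) one_le_two
  rw [condCov, covariance_eq_sub hXc hYc, covariance_eq_sub hX hY,
    integral_sub' integrable_condExp (hXc.integrable_mul hYc),
    integral_condExp hm, integral_condExp hm, integral_condExp hm]
  simp only [Pi.mul_apply]
  ring

lemma condVar_nonneg : 0 ≤ᵐ[μ] Var[X; μ | m] :=
  condExp_nonneg (.of_forall fun _ ↦ sq_nonneg _)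

lemma integral_condVar_le_variance (hm : m ≤ mΩ) [IsProbabilityMeasure μ] (hX : MemLp X 2 μ) :
    μ[Var[X; μ | m]] ≤ Var[X; μ] := by
  rw [← integral_condVar_add_variance_condExp hm hX]
  exact le_add_of_nonneg_right (variance_nonneg _ _)

end ProbabilityTheory

/-- Mixing-to-covariance step: if a.s.
`|Cov(X,Y|F)| ≤ ε √Var(X|F) √Var(Y|F)` and `Cov(E[X|F],E[Y|F]) = 0`, then
`Cov(X,Y) ≤ ε √Var(X) √Var(Y)`. -/
theorem stmt6 {Ω : Type*} {mΩ : MeasurableSpace Ω} (μ : Measure Ω) [IsProbabilityMeasure μ]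
    {m : MeasurableSpace Ω} (hm : m ≤ mΩ)
    (X Y : Ω → ℝ) (hX : MemLp X 2 μ) (hY : MemLp Y 2 μ)
    (ε : ℝ) (hε : 0 ≤ ε)
    (hcond : ∀ᵐ ω ∂μ,
      |(μ[fun ω' => X ω' * Y ω'|m]) ω - (μ[X|m]) ω * (μ[Y|m]) ω|
        ≤ ε * Real.sqrt ((μ[fun ω' => (X ω' - (μ[X|m]) ω') ^ 2|m]) ω)
            * Real.sqrt ((μ[fun ω' => (Y ω' - (μ[Y|m]) ω') ^ 2|m]) ω))
    (hzero : @cov Ω mΩ μ (μ[X|m]) (μ[Y|m]) = 0) :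
    @cov Ω mΩ μ X Y ≤ ε * Real.sqrt (variance X μ) * Real.sqrt (variance Y μ) := by
  rw [cov_eq_covariance] at hzero ⊢
  rw [← integral_condCov_add_covariance_condExp hm hX hY, hzero, add_zero]
  have hsqrt : Integrable (fun ω ↦ √(Var[X; μ | m] ω) * √(Var[Y; μ | m] ω)) μ :=
    (integrable_condVar.memLp_sqrt condVar_nonneg).integrable_mul
      (integrable_condVar.memLp_sqrt condVar_nonneg)
  have hCov : condCov m X Y μ ≤ᵐ[μ] fun ω ↦ ε * (√(Var[X; μ | m] ω) * √(Var[Y; μ | m] ω)) := by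
    filter_upwards [hcond] with ω hω
    exact (le_abs_self _).trans (hω.trans_eq (mul_assoc _ _ _))
  calc μ[condCov m X Y μ]
      ≤ ε * ∫ ω, √(Var[X; μ | m] ω) * √(Var[Y; μ | m] ω) ∂μ := by
        rw [← integral_const_mul]
        exact integral_mono_ae (integrable_condExp.sub
          ((hX.condExp one_le_two).integrable_mul (hY.condExp one_le_two)))
          (hsqrt.const_mul ε) hCov
    _ ≤ ε * (√(μ[Var[X; μ | m]]) * √(μ[Var[Y; μ | m]])) := by
        gcongr
        exact integral_sqrt_mul_sqrt_le integrable_condVar integrable_condVar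
          condVar_nonneg condVar_nonneg
    _ ≤ ε * (√(Var[X; μ]) * √(Var[Y; μ])) := by
        gcongr <;> exact integral_condVar_le_variance hm ‹_›
    _ = ε * √(Var[X; μ]) * √(Var[Y; μ]) := (mul_assoc _ _ _).symm
end

section
/- Let (U_j)_{j=1}^{m} and (V_k)_{k=1}^{m} be square-integrable random variables, and suppose there exist constants a > 0, b > 0, ρ ∈ (0,1) and p ≥ 1 such that Var(U_j)^{1/2} ≤ a·ρ^j, Var(V_k)^{1/2} ≤ b·k^p for all j,k, and Cov(U_j, V_k) ≤ (k−j)^{−(p+2)} Var(U_j)^{1/2} Var(V_k)^{1/2} whenever k ≥ j+1. Then the double sum Σ_{j=1}^m Σ_{k=1}^m Cov(U_j, V_k) is bounded above by a constant C(a,b,ρ,p) independent of m. -/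
/-! By Cauchy–Schwarz every covariance in row `j` is at most `a b ρ^j k^p`. The `j` terms with
`k ≤ j` contribute at most `a b ρ^j j^(p+1)`. For `k = j + d` with `d ≥ 1` one has
`k ≤ 2 j d`, so `k^p ≤ 2^p j^p d^p` and the decorrelation factor `d^(-(p+2))` leaves
`2^p a b ρ^j j^p d^(-2)`, whose sum over `d` is at most `2^(p+1) a b ρ^j j^p`. Each row is thus
`O(j^(p+1) ρ^j)`, and these bounds are summable in `j`. -/

open MeasureTheory ProbabilityTheory Finset

namespace ProbabilityTheory

variable {Ω : Type*} {mΩ : MeasurableSpace Ω} {μ : Measure Ω} {X Y : Ω → ℝ}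

lemma abs_covariance_le_sqrt_variance_mul_sqrt_variance [IsFiniteMeasure μ]
    (hX : MemLp X 2 μ) (hY : MemLp Y 2 μ) :
    |cov[X, Y; μ]| ≤ √(Var[X; μ]) * √(Var[Y; μ]) := by
  have hX' : MemLp (fun ω ↦ X ω - μ[X]) 2 μ := hX.sub (memLp_const _)
  have hY' : MemLp (fun ω ↦ Y ω - μ[Y]) 2 μ := hY.sub (memLp_const _)
  calc |cov[X, Y; μ]| ≤ ∫ ω, ‖X ω - μ[X]‖ * ‖Y ω - μ[Y]‖ ∂μ := by
        simpa [covariance, Real.norm_eq_abs, abs_mul] using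
          norm_integral_le_integral_norm (μ := μ) fun ω ↦ (X ω - μ[X]) * (Y ω - μ[Y])
    _ ≤ (∫ ω, ‖X ω - μ[X]‖ ^ (2 : ℝ) ∂μ) ^ (1 / (2 : ℝ))
          * (∫ ω, ‖Y ω - μ[Y]‖ ^ (2 : ℝ) ∂μ) ^ (1 / (2 : ℝ)) :=
        integral_mul_norm_le_Lp_mul_Lq .two_two (by simpa using hX') (by simpa using hY')
    _ = √(Var[X; μ]) * √(Var[Y; μ]) := by
        simp [variance_eq_integral hX.aemeasurable, variance_eq_integral hY.aemeasurable,
          Real.sqrt_eq_rpow]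

end ProbabilityTheory

lemma add_rpow_le_two_rpow_mul_rpow_mul_rpow {x y p : ℝ} (hx : 1 ≤ x) (hy : 1 ≤ y)
    (hp : 0 ≤ p) : (x + y) ^ p ≤ 2 ^ p * (x ^ p * y ^ p) := by
  calc (x + y) ^ p ≤ (2 * (x * y)) ^ p := by gcongr; nlinarith
    _ = 2 ^ p * (x ^ p * y ^ p) := by
        rw [Real.mul_rpow (by norm_num) (by positivity), Real.mul_rpow (by positivity)
          (by positivity)]

lemma sum_Ioc_inv_sub_sq_le_two (j m : ℕ) : ∑ k ∈ Ioc j m, (((k : ℝ) - j) ^ 2)⁻¹ ≤ 2 := by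
  have hsub : Ioc j m ⊆ (Ioo 0 (m + 1)).map (addLeftEmbedding j) := by
    intro k
    simp only [mem_Ioc, map_add_left_Ioo, add_zero, mem_Ioo]
    omega
  calc ∑ k ∈ Ioc j m, (((k : ℝ) - j) ^ 2)⁻¹
      ≤ ∑ k ∈ (Ioo 0 (m + 1)).map (addLeftEmbedding j), (((k : ℝ) - j) ^ 2)⁻¹ :=
        sum_le_sum_of_subset_of_nonneg hsub fun _ _ _ ↦ by positivity
    _ = ∑ d ∈ Ioo 0 (m + 1), ((d : ℝ) ^ 2)⁻¹ := by rw [sum_map]; simp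
    _ ≤ 2 := (sum_Ioo_inv_sq_le 0 (m + 1)).trans (by norm_num)

lemma summable_rpow_mul_geometric (q : ℝ) {ρ : ℝ} (hρ0 : 0 ≤ ρ) (hρ1 : ρ < 1) :
    Summable fun n : ℕ ↦ (n : ℝ) ^ q * ρ ^ n := by
  have hρ : ‖ρ‖ < 1 := by rwa [Real.norm_of_nonneg hρ0]
  have hbound (n : ℕ) : (n : ℝ) ^ q ≤ (n : ℝ) ^ ⌈q⌉₊ + 1 := by
    rcases Nat.eq_zero_or_pos n with rfl | hn
    · simpa using (Real.zero_rpow_le_one q).trans (le_add_of_nonneg_left (by positivity))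
    · have hn1 : (1 : ℝ) ≤ n := by exact_mod_cast hn
      calc (n : ℝ) ^ q ≤ (n : ℝ) ^ (⌈q⌉₊ : ℝ) :=
            Real.rpow_le_rpow_of_exponent_le hn1 (Nat.le_ceil q)
        _ ≤ (n : ℝ) ^ ⌈q⌉₊ + 1 := by rw [Real.rpow_natCast]; linarith
  refine .of_nonneg_of_le (fun n ↦ by positivity) (fun n ↦ ?_)
    ((summable_pow_mul_geometric_of_norm_lt_one ⌈q⌉₊ hρ).add (summable_geometric_of_lt_one hρ0 hρ1))
  simpa [add_mul] using mul_le_mul_of_nonneg_right (hbound n) (pow_nonneg hρ0 n)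
lemma sum_Icc_le_of_decorrelation {B p : ℝ} (hB : 0 ≤ B) (hp : 0 ≤ p) {j m : ℕ}
    (hj : j ∈ Icc 1 m) {c : ℕ → ℝ}
    (hnear : ∀ k ∈ Icc 1 m, k ≤ j → c k ≤ B * (k : ℝ) ^ p)
    (hfar : ∀ k ∈ Icc 1 m, j < k → c k ≤ ((k : ℝ) - j) ^ (-(p + 2)) * (B * (k : ℝ) ^ p)) :
    ∑ k ∈ Icc 1 m, c k ≤ (1 + 2 ^ (p + 1)) * B * (j : ℝ) ^ (p + 1) := by
  obtain ⟨hj1, hjm⟩ := mem_Icc.mp hj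
  have hj1' : (1 : ℝ) ≤ j := by exact_mod_cast hj1
  have hnear_sum : ∑ k ∈ Ioc 0 j, c k ≤ B * (j : ℝ) ^ (p + 1) := by
    calc ∑ k ∈ Ioc 0 j, c k ≤ ∑ k ∈ Ioc 0 j, B * (j : ℝ) ^ p := sum_le_sum fun k hk ↦ by
          obtain ⟨hk0, hkj⟩ := mem_Ioc.mp hk
          calc c k ≤ B * (k : ℝ) ^ p := hnear k (mem_Icc.mpr ⟨hk0, hkj.trans hjm⟩) hkj
            _ ≤ B * (j : ℝ) ^ p := by gcongr
      _ = B * (j : ℝ) ^ (p + 1) := by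
          rw [sum_const, Nat.card_Ioc, nsmul_eq_mul, Real.rpow_add_one (by positivity)]
          rw [Nat.sub_zero]; ring
  have hfar_term : ∀ k ∈ Ioc j m, c k ≤ 2 ^ p * B * (j : ℝ) ^ p * (((k : ℝ) - j) ^ 2)⁻¹ := by
    intro k hk
    obtain ⟨hjk, hkm⟩ := mem_Ioc.mp hk
    have hd : (1 : ℝ) ≤ (k : ℝ) - j := by
      have : (j : ℝ) + 1 ≤ k := by exact_mod_cast hjk
      linarith
    have hd0 : (0 : ℝ) < k - j := by linarith
    have hkp : (k : ℝ) ^ p ≤ 2 ^ p * ((j : ℝ) ^ p * ((k : ℝ) - j) ^ p) := by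
      simpa using add_rpow_le_two_rpow_mul_rpow_mul_rpow hj1' hd hp
    have hexp : ((k : ℝ) - j) ^ (-(p + 2)) * ((k : ℝ) - j) ^ p = (((k : ℝ) - j) ^ 2)⁻¹ := by
      rw [← Real.rpow_add hd0, show -(p + 2) + p = -((2 : ℕ) : ℝ) by push_cast; ring,
        Real.rpow_neg hd0.le, Real.rpow_natCast]
    calc c k ≤ ((k : ℝ) - j) ^ (-(p + 2)) * (B * (k : ℝ) ^ p) :=
          hfar k (mem_Icc.mpr ⟨by omega, hkm⟩) hjk
      _ ≤ ((k : ℝ) - j) ^ (-(p + 2)) * (B * (2 ^ p * ((j : ℝ) ^ p * ((k : ℝ) - j) ^ p))) :=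
          mul_le_mul_of_nonneg_left (by gcongr) (Real.rpow_nonneg hd0.le _)
      _ = 2 ^ p * B * (j : ℝ) ^ p * (((k : ℝ) - j) ^ (-(p + 2)) * ((k : ℝ) - j) ^ p) := by ring
      _ = 2 ^ p * B * (j : ℝ) ^ p * (((k : ℝ) - j) ^ 2)⁻¹ := by rw [hexp]
  have hfar_sum : ∑ k ∈ Ioc j m, c k ≤ 2 ^ (p + 1) * B * (j : ℝ) ^ (p + 1) := by
    calc ∑ k ∈ Ioc j m, c k
        ≤ 2 ^ p * B * (j : ℝ) ^ p * ∑ k ∈ Ioc j m, (((k : ℝ) - j) ^ 2)⁻¹ := by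
          rw [mul_sum]; exact sum_le_sum hfar_term
      _ ≤ 2 ^ p * B * (j : ℝ) ^ p * 2 := by gcongr; exact sum_Ioc_inv_sub_sq_le_two j m
      _ ≤ 2 ^ p * B * (j : ℝ) ^ p * (2 * j) := by gcongr; linarith
      _ = 2 ^ (p + 1) * B * (j : ℝ) ^ (p + 1) := by
          rw [Real.rpow_add_one two_ne_zero, Real.rpow_add_one (by positivity)]; ring
  have hIcc : Icc 1 m = Ioc 0 m := by ext; simp only [mem_Icc, mem_Ioc]; omega
  rw [hIcc, ← sum_Ioc_consecutive c (Nat.zero_le j) hjm]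
  linarith

/-- Summation scheme: if `√Var(U_j) ≤ a·ρ^j`, `√Var(V_k) ≤ b·k^p`, and for k ≥ j+1
`Cov(U_j, V_k) ≤ (k−j)^{−(p+2)} √Var(U_j) √Var(V_k)`, then
`∑_{j=1}^m ∑_{k=1}^m Cov(U_j, V_k)` is bounded by a constant depending only on
a, b, ρ, p (independent of m). -/
theorem stmt19 (a b ρ p : ℝ) (ha : 0 < a) (hb : 0 < b) (hρ0 : 0 < ρ) (hρ1 : ρ < 1)
    (hp : 1 ≤ p) :
    ∃ C : ℝ, ∀ (Ω : Type) (_ : MeasurableSpace Ω) (μ : Measure Ω),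
      IsProbabilityMeasure μ →
      ∀ (m : ℕ) (U V : ℕ → Ω → ℝ),
        (∀ j, MemLp (U j) 2 μ) → (∀ k, MemLp (V k) 2 μ) →
        (∀ j ∈ Finset.Icc 1 m, Real.sqrt (variance (U j) μ) ≤ a * ρ ^ j) →
        (∀ k ∈ Finset.Icc 1 m, Real.sqrt (variance (V k) μ) ≤ b * (k : ℝ) ^ p) →
        (∀ j k : ℕ, 1 ≤ j → j + 1 ≤ k → k ≤ m →
          cov μ (U j) (V k)
            ≤ ((k : ℝ) - (j : ℝ)) ^ (-(p + 2)) * Real.sqrt (variance (U j) μ)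
                * Real.sqrt (variance (V k) μ)) →
        ∑ j ∈ Finset.Icc 1 m, ∑ k ∈ Finset.Icc 1 m, cov μ (U j) (V k) ≤ C := by
  refine ⟨(1 + 2 ^ (p + 1)) * (a * b) * ∑' j : ℕ, (j : ℝ) ^ (p + 1) * ρ ^ j, ?_⟩
  intro Ω _ μ _ m U V hU hV hUσ hVσ hcov
  have hσ : ∀ j ∈ Icc 1 m, ∀ k ∈ Icc 1 m,
      √(variance (U j) μ) * √(variance (V k) μ) ≤ a * b * ρ ^ j * (k : ℝ) ^ p :=
    fun j hj k hk ↦ (mul_le_mul (hUσ j hj) (hVσ k hk) (Real.sqrt_nonneg _) (by positivity)).trans_eq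
      (by ring)
  have hrow : ∀ j ∈ Icc 1 m, ∑ k ∈ Icc 1 m, cov μ (U j) (V k)
      ≤ (1 + 2 ^ (p + 1)) * (a * b) * ((j : ℝ) ^ (p + 1) * ρ ^ j) := by
    intro j hj
    refine (sum_Icc_le_of_decorrelation (B := a * b * ρ ^ j) (by positivity) (by linarith) hj
      (fun k hk _ ↦ ?_) (fun k hk hjk ↦ ?_)).trans_eq (by ring)
    · exact (le_abs_self _).trans
        ((abs_covariance_le_sqrt_variance_mul_sqrt_variance (hU j) (hV k)).trans (hσ j hj k hk))
    · refine (hcov j k (mem_Icc.mp hj).1 hjk (mem_Icc.mp hk).2).trans ?_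
      rw [mul_assoc]
      exact mul_le_mul_of_nonneg_left (hσ j hj k hk)
        (Real.rpow_nonneg (sub_nonneg.mpr (by exact_mod_cast hjk.le)) _)
  calc ∑ j ∈ Icc 1 m, ∑ k ∈ Icc 1 m, cov μ (U j) (V k)
      ≤ (1 + 2 ^ (p + 1)) * (a * b) * ∑ j ∈ Icc 1 m, (j : ℝ) ^ (p + 1) * ρ ^ j := by
        rw [mul_sum]; exact sum_le_sum hrow
    _ ≤ _ := by
        gcongr
        exact (summable_rpow_mul_geometric _ hρ0.le hρ1).sum_le_tsum _ fun j _ ↦ by positivity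
end
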